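/- arXiv:1503.00650 — 4 statements merged into one kernel-verified Lean document; each statement's English description precedes it below -/
import Mathlib

section
/- Let R be a relation on a finite type V, let D be a repair of R, and let S be a sink strongly connected component of R. Then D contains a simple cycle all of whose vertices lie in S. -/
/-- A relation is consistent (satisfies the key constraint on the first attribute)
if it is functional. -/
def Consistent {V : Type*} (R : V → V → Prop) : Prop :=
  ∀ a b b', R a b → R a b' → b = b'

/-- `D` is a (subset) repair of `R`: a maximal consistent subrelation of `R`. -/
def Repair {V : Type*} (R D : V → V → Prop) : Prop :=
  (∀ a b, D a b → R a b) ∧ Consistent D ∧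
  ∀ D' : V → V → Prop, Consistent D' → (∀ a b, D a b → D' a b) →
    (∀ a b, D' a b → R a b) → D' = D

/-- A simple cycle of length `k` in `D`: an injective closed walk `ZMod k → V`. -/
def IsSimpleCycle {V : Type*} (D : V → V → Prop) (k : ℕ) (g : ZMod k → V) : Prop :=
  Function.Injective g ∧ ∀ i, D (g i) (g (i + 1))

/-- A sink strongly connected component of `R`. -/
def SinkSCC {V : Type*} (R : V → V → Prop) (S : Set V) : Prop :=
  S.Nonempty ∧ (∀ a ∈ S, ∀ b ∈ S, Relation.ReflTransGen R a b) ∧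
  (∀ a ∈ S, ∃ b, R a b) ∧ (∀ a ∈ S, ∀ b, R a b → b ∈ S)

theorem stmt2 {V : Type*} [Fintype V] (R D : V → V → Prop) (hD : Repair R D)
    (S : Set V) (hS : SinkSCC R S) :
    ∃ k : ℕ, 1 ≤ k ∧ ∃ g : ZMod k → V, IsSimpleCycle D k g ∧ ∀ i, g i ∈ S := by
  classical
  obtain ⟨hsub, hcons, hmax⟩ := hD
  obtain ⟨⟨s0, hs0⟩, hconn, hout, hsink⟩ := hS
  -- every vertex of S has an outgoing D-edge
  have htot : ∀ a ∈ S, ∃ b, D a b := by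
    intro a ha
    by_contra h
    push_neg at h
    obtain ⟨b0, hb0⟩ := hout a ha
    have heq := hmax (fun x y => D x y ∨ (x = a ∧ y = b0))
      (by
        intro x y y' h1 h2
        rcases h1 with h1 | ⟨rfl, rfl⟩
        · rcases h2 with h2 | ⟨rfl, rfl⟩
          · exact hcons _ _ _ h1 h2
          · exact absurd h1 (h y)
        · rcases h2 with h2 | ⟨-, rfl⟩
          · exact absurd h2 (h y')
          · rfl)
      (fun x y hxy => Or.inl hxy)
      (by rintro x y (hxy | ⟨rfl, rfl⟩); exacts [hsub x y hxy, hb0])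
    have he2 : (D a b0 ∨ (a = a ∧ b0 = b0)) = D a b0 := congrFun (congrFun heq a) b0
    exact h b0 (he2 ▸ Or.inr ⟨rfl, rfl⟩)
  -- the D-successor function on S
  have fdef : ∀ a : S, ∃ b : S, D a.1 b.1 := by
    intro a
    obtain ⟨b, hb⟩ := htot a.1 a.2
    exact ⟨⟨b, hsink a.1 a.2 b (hsub a.1 b hb)⟩, hb⟩
  choose f hf using fdef
  haveI : Finite S := Set.toFinite S
  obtain ⟨m, n, hmn, hiter⟩ := Finite.exists_ne_map_eq_of_infinite (fun i : ℕ => f^[i] ⟨s0, hs0⟩)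
  wlog hlt : m < n generalizing m n
  · exact this n m hmn.symm hiter.symm (by omega)
  set x : S := f^[m] ⟨s0, hs0⟩ with hx
  have hperiodic : Function.IsPeriodicPt f (n - m) x := by
    have : f^[n - m] (f^[m] ⟨s0, hs0⟩) = f^[m] ⟨s0, hs0⟩ := by
      rw [← Function.iterate_add_apply]
      rw [Nat.sub_add_cancel hlt.le]
      exact hiter.symm
    exact this
  have hkpos : 0 < Function.minimalPeriod f x :=
    hperiodic.minimalPeriod_pos (by omega)
  set k := Function.minimalPeriod f x with hk
  haveI : NeZero k := ⟨hkpos.ne'⟩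
  have hper : Function.IsPeriodicPt f k x := Function.isPeriodicPt_minimalPeriod f x
  refine ⟨k, hkpos, fun i => (f^[i.val] x).1, ⟨?_, ?_⟩, fun i => (f^[i.val] x).2⟩
  · intro i j hij
    have h1 : f^[i.val] x = f^[j.val] x := Subtype.ext hij
    have h2 : i.val = j.val :=
      Function.iterate_injOn_Iio_minimalPeriod (ZMod.val_lt i) (ZMod.val_lt j) h1
    exact ZMod.val_injective k h2
  · intro i
    have hmod : (i + 1 : ZMod k).val % k = (i.val + 1) % k := by
      have : ((i + 1 : ZMod k).val : ZMod k) = ((i.val + 1 : ℕ) : ZMod k) := by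
        push_cast [ZMod.natCast_val, ZMod.cast_id]
        rfl
      rwa [ZMod.natCast_eq_natCast_iff', ] at this
    have hstep : f^[(i + 1 : ZMod k).val] x = f (f^[i.val] x) := by
      have e1 : f^[(i + 1 : ZMod k).val] x = f^[(i + 1 : ZMod k).val % k] x :=
        (hper.iterate_mod_apply _).symm
      have e2 : f^[(i.val + 1) % k] x = f^[i.val + 1] x := hper.iterate_mod_apply _
      rw [e1, hmod, e2, Function.iterate_succ_apply']
    show D ((f^[i.val] x : S) : V) ((f^[(i + 1 : ZMod k).val] x : S) : V)
    rw [hstep]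
    exact hf (f^[i.val] x)
end

section
/- Let R be a relation on a finite type V, let S be a strongly connected component of R, and let C be a simple cycle of R all of whose vertices lie in S. Then there exists a repair D of R such that every edge of C is an edge of D, and every simple cycle of D whose vertices all lie in S has the same vertex set as C. -/
/-- A strongly connected component of `R`: a set, maximal under inclusion, any two of whose
vertices are joined by directed `R`-walks. -/
def IsSCC {V : Type*} (R : V → V → Prop) (S : Set V) : Prop :=
  (∀ a ∈ S, ∀ b ∈ S, Relation.ReflTransGen R a b) ∧
  ∀ T : Set V, S ⊆ T → (∀ a ∈ T, ∀ b ∈ T, Relation.ReflTransGen R a b) → T = S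

section Aux

open Classical

variable {V : Type*}

/-- `a` can reach the set `T` in exactly `n` `R`-steps. -/
def ReachIn (R : V → V → Prop) (T : Set V) : ℕ → V → Prop
  | 0, a => a ∈ T
  | n + 1, a => ∃ b, R a b ∧ ReachIn R T n b

theorem reachIn_of_rtg {R : V → V → Prop} {T : Set V} {a c : V}
    (h : Relation.ReflTransGen R a c) (hc : c ∈ T) : ∃ n, ReachIn R T n a := by
  induction h using Relation.ReflTransGen.head_induction_on with
  | refl => exact ⟨0, hc⟩
  | head hab _ ih =>
    obtain ⟨n, hn⟩ := ih
    exact ⟨n + 1, _, hab, hn⟩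

/-- Distance to the set `T` along `R` (junk value 0 if unreachable). -/
noncomputable def dd (R : V → V → Prop) (T : Set V) (a : V) : ℕ :=
  if h : ∃ n, ReachIn R T n a then Nat.find h else 0

/-- There is an `R`-successor of `a` which is strictly closer to `T` whenever `a ∈ S`. -/
def QQ (R : V → V → Prop) (S T : Set V) (a : V) : Prop :=
  ∃ c, R a c ∧ (a ∈ S → dd R T c < dd R T a)

noncomputable def ff (R : V → V → Prop) (S T : Set V) (a : V) : V :=
  if h : QQ R S T a then h.choose else a

theorem ff_spec {R : V → V → Prop} {S T : Set V} {a : V} (h : QQ R S T a) :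
    R a (ff R S T a) ∧ (a ∈ S → dd R T (ff R S T a) < dd R T a) := by
  rw [ff, dif_pos h]; exact h.choose_spec

theorem qq_of_reach {R : V → V → Prop} {S T : Set V} {a : V}
    (hmem : ∃ n, ReachIn R T n a) (haT : a ∉ T) : QQ R S T a := by
  have hfind := Nat.find_spec hmem
  have hd : dd R T a = Nat.find hmem := dif_pos hmem
  cases hn : Nat.find hmem with
  | zero => rw [hn] at hfind; exact absurd hfind haT
  | succ m =>
    rw [hn] at hfind
    obtain ⟨b, hab, hb⟩ := hfind
    refine ⟨b, hab, fun _ => ?_⟩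
    have hb' : ∃ n, ReachIn R T n b := ⟨m, hb⟩
    have hle : dd R T b ≤ m := by rw [dd, dif_pos hb']; exact Nat.find_le hb
    rw [hd, hn]; omega

end Aux

theorem stmt3 {V : Type*} [Fintype V] (R : V → V → Prop) (S : Set V) (hS : IsSCC R S)
    (k : ℕ) (hk : 1 ≤ k) (g : ZMod k → V) (hg : IsSimpleCycle R k g) (hgS : ∀ i, g i ∈ S) :
    ∃ D : V → V → Prop, Repair R D ∧ (∀ i, D (g i) (g (i + 1))) ∧
      ∀ l : ℕ, 1 ≤ l → ∀ h : ZMod l → V, IsSimpleCycle D l h → (∀ j, h j ∈ S) →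
        Set.range h = Set.range g := by
  classical
  have hkz : NeZero k := ⟨by omega⟩
  set T : Set V := Set.range g with hT
  set D : V → V → Prop := fun a b =>
    (∃ i, a = g i ∧ b = g (i + 1)) ∨ (a ∉ T ∧ QQ R S T a ∧ b = ff R S T a) with hD
  -- D ⊆ R
  have hsubR : ∀ a b, D a b → R a b := by
    rintro a b (⟨i, rfl, rfl⟩ | ⟨_, hQ, rfl⟩)
    · exact hg.2 i
    · exact (ff_spec hQ).1
  -- D is consistent
  have hcons : Consistent D := by
    rintro a b b' (⟨i, rfl, rfl⟩ | ⟨haT, hQ, rfl⟩) hb'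
    · rcases hb' with ⟨i', hi', rfl⟩ | ⟨haT, _, _⟩
      · rw [hg.1 hi']
      · exact absurd ⟨i, rfl⟩ haT
    · rcases hb' with ⟨i', hi', _⟩ | ⟨_, _, rfl⟩
      · exact absurd ⟨i', hi'.symm⟩ haT
      · rfl
  -- QQ holds for any S-vertex not on the cycle with an outgoing R-edge (in fact always)
  have hQS : ∀ a, a ∈ S → a ∉ T → QQ R S T a := by
    intro a haS haT
    exact qq_of_reach (reachIn_of_rtg (hS.1 a haS (g 0) (hgS 0)) ⟨0, rfl⟩) haT
  refine ⟨D, ⟨hsubR, hcons, ?_⟩, fun i => Or.inl ⟨i, rfl, rfl⟩, ?_⟩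
  · -- maximality
    intro D' hcons' hsub hsubR'
    funext a b
    apply propext
    refine ⟨fun hab => ?_, fun hab => hsub a b hab⟩
    by_cases haT : a ∈ T
    · obtain ⟨i, rfl⟩ := haT
      have : b = g (i + 1) := hcons' _ _ _ hab (hsub _ _ (Or.inl ⟨i, rfl, rfl⟩))
      exact Or.inl ⟨i, rfl, this⟩
    · have hQ : QQ R S T a := by
        by_cases haS : a ∈ S
        · exact hQS a haS haT
        · exact ⟨b, hsubR' a b hab, fun hs => absurd hs haS⟩
      have hDf : D a (ff R S T a) := Or.inr ⟨haT, hQ, rfl⟩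
      have : b = ff R S T a := hcons' _ _ _ hab (hsub _ _ hDf)
      exact Or.inr ⟨haT, hQ, this⟩
  · -- any simple cycle of D inside S has the same vertex set as g
    intro l hl h hh hhS
    have hlz : NeZero l := ⟨by omega⟩
    by_cases hcase : ∃ j i, h j = g i
    · obtain ⟨j0, i0, hj0⟩ := hcase
      have step : ∀ (j : ZMod l) (i : ZMod k), h j = g i → h (j + 1) = g (i + 1) := by
        intro j i hji
        have h1 : D (h j) (h (j + 1)) := hh.2 j
        rw [hji] at h1
        exact hcons _ _ _ h1 (Or.inl ⟨i, rfl, rfl⟩)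
      have main : ∀ t : ℕ, h (j0 + (t : ZMod l)) = g (i0 + (t : ZMod k)) := by
        intro t
        induction t with
        | zero => simpa using hj0
        | succ t ih =>
          have h2 := step _ _ ih
          rw [add_assoc, add_assoc] at h2
          push_cast
          exact h2
      ext x
      simp only [Set.mem_range]
      constructor
      · rintro ⟨j, rfl⟩
        refine ⟨i0 + ((j - j0).val : ZMod k), ?_⟩
        have := main (j - j0).val
        rw [show (((j - j0).val : ℕ) : ZMod l) = j - j0 by
          rw [ZMod.natCast_val, ZMod.cast_id], add_sub_cancel] at this
        exact this.symm
      · rintro ⟨i, rfl⟩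
        refine ⟨j0 + ((i - i0).val : ZMod l), ?_⟩
        have := main (i - i0).val
        rw [show (((i - i0).val : ℕ) : ZMod k) = i - i0 by
          rw [ZMod.natCast_val, ZMod.cast_id], add_sub_cancel] at this
        exact this
    · -- no cycle vertex on g: distance strictly decreases around the cycle, contradiction
      push_neg at hcase
      exfalso
      have hstep : ∀ j : ZMod l, dd R T (h (j + 1)) < dd R T (h j) := by
        intro j
        have h1 : D (h j) (h (j + 1)) := hh.2 j
        rcases h1 with ⟨i, hji, _⟩ | ⟨_, hQ, heq⟩
        · exact absurd hji (by exact fun hji => hcase j i hji)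
        · rw [heq]
          exact (ff_spec hQ).2 (hhS j)
      have main : ∀ t : ℕ, dd R T (h (t : ZMod l)) + t ≤ dd R T (h 0) := by
        intro t
        induction t with
        | zero => simp
        | succ t ih =>
          have := hstep (t : ZMod l)
          push_cast
          omega
      have := main l
      rw [ZMod.natCast_self] at this
      omega
end

section
/- Every relation R on a finite type V has a repair D such that every simple cycle of D has all of its vertices contained in some sink strongly connected component of R. -/
/-!
Call a vertex essential if every vertex it reaches reaches it back; the vertices reachable from
an essential vertex with an outgoing edge form a sink SCC, and in a finite graph every vertex
reaches an essential one. Let every vertex with an outgoing edge keep one edge, chosen at a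
non-essential vertex so as to decrease the distance to the essential vertices. This is a repair,
and on any of its cycles the vertex of least distance must be essential, so the whole cycle lies
in the sink SCC of that vertex.
-/

open Relation

lemma ZMod.reflTransGen_of_forall_rel {α : Type*} {r : α → α → Prop} {k : ℕ} [NeZero k]
    {g : ZMod k → α} (h : ∀ i, r (g i) (g (i + 1))) (i j : ZMod k) :
    ReflTransGen r (g i) (g j) := by
  have hforward : ∀ n : ℕ, ReflTransGen r (g i) (g (i + n)) := by
    intro n
    induction n with
    | zero => simpa using ReflTransGen.refl
    | succ n ih => simpa [Nat.cast_succ, add_assoc] using ih.tail (h (i + n))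
  simpa using hforward (j - i).val

lemma repair_of_choice {V : Type*} {R : V → V → Prop} (f : V → V)
    (hf : ∀ a b, R a b → R a (f a)) : Repair R (fun a b => R a b ∧ b = f a) := by
  refine ⟨fun a b h => h.1, fun a b b' h h' => h.2.trans h'.2.symm, ?_⟩
  intro D' hD' hsub hD'R
  funext a b
  refine propext ⟨fun h => ⟨hD'R a b h, ?_⟩, hsub a b⟩
  exact hD' a b (f a) h (hsub a (f a) ⟨hf a b (hD'R a b h), rfl⟩)

section Essential

variable {V : Type*} {R : V → V → Prop}

def IsEssential (R : V → V → Prop) (a : V) : Prop :=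
  ∀ c, ReflTransGen R a c → ReflTransGen R c a

lemma IsEssential.sinkSCC {a b : V} (ha : IsEssential R a) (hab : R a b) :
    SinkSCC R {c | ReflTransGen R a c} := by
  refine ⟨⟨a, .refl⟩, fun c hc d hd => (ha c hc).trans hd, fun c hc => ?_,
    fun c hc d hcd => hc.tail hcd⟩
  rcases (ha c hc).cases_head with rfl | ⟨d, hcd, -⟩
  exacts [⟨b, hab⟩, ⟨d, hcd⟩]

lemma exists_isEssential_of_finite [Finite V] (a : V) :
    ∃ c, ReflTransGen R a c ∧ IsEssential R c := by
  obtain ⟨c, hac, hmin⟩ := Set.Finite.exists_minimalFor (fun c => {d | ReflTransGen R c d})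
    {c | ReflTransGen R a c} (Set.toFinite _) ⟨a, .refl⟩
  refine ⟨c, hac, fun d hcd => ?_⟩
  have hsub : {e | ReflTransGen R d e} ⊆ {e | ReflTransGen R c e} := fun e hde => hcd.trans hde
  exact hmin (hac.trans hcd) hsub (ReflTransGen.refl : ReflTransGen R c c)

end Essential

section Distance

variable {V : Type*} {R : V → V → Prop} {P : Set V}

/-- The vertices from which `P` can be reached in at most `n` steps. -/
def reachesWithin (R : V → V → Prop) (P : Set V) : ℕ → Set V
  | 0 => P
  | n + 1 => P ∪ {a | ∃ b, R a b ∧ b ∈ reachesWithin R P n}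

/-- Junk value `0` when `P` is unreachable from `a`. -/
noncomputable def distTo (R : V → V → Prop) (P : Set V) (a : V) : ℕ :=
  sInf {n | a ∈ reachesWithin R P n}

lemma exists_mem_reachesWithin {a c : V} (hac : ReflTransGen R a c) (hc : c ∈ P) :
    ∃ n, a ∈ reachesWithin R P n := by
  induction hac using ReflTransGen.head_induction_on with
  | refl => exact ⟨0, hc⟩
  | head hab _ ih =>
    obtain ⟨n, hn⟩ := ih
    exact ⟨n + 1, Or.inr ⟨_, hab, hn⟩⟩

lemma exists_rel_distTo_lt {a : V} (ha : ∃ n, a ∈ reachesWithin R P n) (haP : a ∉ P) :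
    ∃ b, R a b ∧ distTo R P b < distTo R P a := by
  have hmem : a ∈ reachesWithin R P (distTo R P a) := Nat.sInf_mem ha
  obtain ⟨m, hm⟩ : ∃ m, distTo R P a = m + 1 :=
    Nat.exists_eq_succ_of_ne_zero fun h0 => haP (by rwa [h0] at hmem)
  rw [hm] at hmem
  obtain ⟨b, hab, hb⟩ := hmem.resolve_left haP
  exact ⟨b, hab, hm ▸ Nat.lt_succ_of_le (Nat.sInf_le hb)⟩

end Distance

lemma exists_choice_decreasing_distTo_isEssential {V : Type*} [Finite V] (R : V → V → Prop) :
    ∃ f : V → V, (∀ a b, R a b → R a (f a)) ∧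
      ∀ a, ¬ IsEssential R a →
        distTo R {c | IsEssential R c} (f a) < distTo R {c | IsEssential R c} a := by
  have hchoice : ∀ a, ∃ b, (∀ c, R a c → R a b) ∧
      (¬ IsEssential R a →
        distTo R {c | IsEssential R c} b < distTo R {c | IsEssential R c} a) := by
    intro a
    by_cases ha : IsEssential R a
    · by_cases hout : ∃ b, R a b
      · obtain ⟨b, hab⟩ := hout
        exact ⟨b, fun _ _ => hab, absurd ha⟩
      · exact ⟨a, fun c hac => absurd ⟨c, hac⟩ hout, absurd ha⟩
    · obtain ⟨c, hac, hc⟩ := exists_isEssential_of_finite (R := R) a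
      obtain ⟨b, hab, hlt⟩ := exists_rel_distTo_lt (P := {c | IsEssential R c})
        (exists_mem_reachesWithin hac hc) ha
      exact ⟨b, fun _ _ => hab, fun _ => hlt⟩
  choose f hf using hchoice
  exact ⟨f, fun a b => (hf a).1 b, fun a => (hf a).2⟩

theorem stmt4 {V : Type*} [Fintype V] (R : V → V → Prop) :
    ∃ D : V → V → Prop, Repair R D ∧
      ∀ k : ℕ, 1 ≤ k → ∀ g : ZMod k → V, IsSimpleCycle D k g →
        ∃ S : Set V, SinkSCC R S ∧ ∀ i, g i ∈ S := by
  obtain ⟨f, hfR, hf_lt⟩ := exists_choice_decreasing_distTo_isEssential R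
  refine ⟨_, repair_of_choice f hfR, fun k hk g hcycle => ?_⟩
  obtain ⟨-, hg⟩ := hcycle
  have : NeZero k := ⟨by omega⟩
  obtain ⟨i, hi⟩ := Finite.exists_min fun j => distTo R {c | IsEssential R c} (g j)
  have hess : IsEssential R (g i) := by
    by_contra hne
    have hlt := hf_lt _ hne
    rw [← (hg i).2] at hlt
    exact (hi (i + 1)).not_gt hlt
  exact ⟨_, hess.sinkSCC (hg i).1,
    ZMod.reflTransGen_of_forall_rel (fun j => (hg j).1) i⟩
end

section
/- Let k_1, …, k_m be integers each at least 2 such that no k_i divides k_j for i ≠ j, and let R be a relation on a finite type V. Then every repair of R contains, for each i ∈ {1,…,m}, a closed walk of length k_i, if and only if for each i there exists a sink strongly connected component S_i of R such that every simple cycle of R with all its vertices in S_i has length dividing k_i. -/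
/-- A closed walk of length `n` in `D`: a map `ZMod n → V` following `D`-edges. -/
def IsClosedWalk {V : Type*} (D : V → V → Prop) (n : ℕ) (g : ZMod n → V) : Prop :=
  ∀ i, D (g i) (g (i + 1))

namespace Stmt6Aux

variable {V : Type*}

/-- iterates of a point with `f^[L] c = c` only depend on exponent mod `L`. -/
lemma iterate_mod_eq {f : V → V} {c : V} {L : ℕ} (h : f^[L] c = c) (t : ℕ) :
    f^[t % L] c = f^[t] c := by
  conv_rhs => rw [← Nat.mod_add_div t L]
  rw [Function.iterate_add_apply, Function.iterate_mul, Function.iterate_fixed h]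

lemma iterate_congr_mod {f : V → V} {c : V} {L : ℕ} (h : f^[L] c = c) {a b : ℕ}
    (hab : (a : ZMod L) = (b : ZMod L)) : f^[a] c = f^[b] c := by
  rw [← iterate_mod_eq h a, ← iterate_mod_eq h b]
  have := (ZMod.natCast_eq_natCast_iff' a b L).mp hab
  rw [this]

def reachSet (R : V → V → Prop) (v : V) : Set V := {w | Relation.ReflTransGen R v w}

lemma self_mem_reachSet (R : V → V → Prop) (v : V) : v ∈ reachSet R v :=
  Relation.ReflTransGen.refl

lemma reachSet_subset {R : V → V → Prop} {v u : V} (hu : u ∈ reachSet R v) :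
    reachSet R u ⊆ reachSet R v := fun _ hx => Relation.ReflTransGen.trans hu hx

lemma sinkSCC_eq_reach {R : V → V → Prop} {S : Set V} (hS : SinkSCC R S) {v : V} (hv : v ∈ S) :
    S = reachSet R v := by
  ext w
  constructor
  · exact fun hw => hS.2.1 v hv w hw
  · intro hw
    induction hw with
    | refl => exact hv
    | tail _ h2 ih => exact hS.2.2.2 _ ih _ h2

lemma exists_reach_terminal [Fintype V] (R : V → V → Prop) (v : V) :
    ∃ w, Relation.ReflTransGen R v w ∧
      ((¬ ∃ b, R w b) ∨ SinkSCC R (reachSet R w)) := by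
  classical
  have hfin : (reachSet R v).Finite := Set.toFinite _
  obtain ⟨w, hwv, hwmin⟩ := Set.exists_min_image (reachSet R v)
    (fun u => (Set.toFinite (reachSet R u)).toFinset.card) hfin ⟨v, self_mem_reachSet R v⟩
  refine ⟨w, hwv, ?_⟩
  have hkey : ∀ u ∈ reachSet R w, reachSet R u = reachSet R w := by
    intro u hu
    have h1 : reachSet R u ⊆ reachSet R w := reachSet_subset hu
    have h2 : u ∈ reachSet R v := reachSet_subset hwv hu
    have hle := hwmin u h2
    have hsub : (Set.toFinite (reachSet R u)).toFinset ⊆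
        (Set.toFinite (reachSet R w)).toFinset := by
      intro x hx
      simp only [Set.Finite.mem_toFinset] at hx ⊢
      exact h1 hx
    have := Finset.eq_of_subset_of_card_le hsub hle
    have : (Set.toFinite (reachSet R u)).toFinset = (Set.toFinite (reachSet R w)).toFinset := this
    ext x
    constructor
    · exact fun hx => h1 hx
    · intro hx
      have : x ∈ (Set.toFinite (reachSet R u)).toFinset := by
        rw [this]; simpa [Set.Finite.mem_toFinset] using hx
      simpa [Set.Finite.mem_toFinset] using this
  by_cases hout : ∃ b, R w b
  · right
    refine ⟨⟨w, self_mem_reachSet R w⟩, ?_, ?_, ?_⟩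
    · intro a ha b hb
      have := hkey a ha
      rw [← this] at hb
      exact hb
    · intro a ha
      by_contra hna
      push_neg at hna
      have hra : reachSet R a = {a} := by
        ext x
        constructor
        · intro hx
          rcases (Relation.ReflTransGen.cases_head hx) with h | ⟨c, hc, _⟩
          · simp [h.symm]
          · exact absurd hc (hna c)
        · intro hx
          simp only [Set.mem_singleton_iff] at hx
          exact hx ▸ self_mem_reachSet R a
      have := hkey a ha
      rw [hra] at this
      have hw : w ∈ ({a} : Set V) := by rw [this]; exact self_mem_reachSet R w
      obtain ⟨b, hb⟩ := hout
      rw [Set.mem_singleton_iff] at hw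
      subst hw
      exact hna b hb
    · intro a ha b hb
      have := hkey a ha
      rw [← this]
      exact Relation.ReflTransGen.single hb
  · exact Or.inl hout

lemma Repair.total {R D : V → V → Prop} (h : Repair R D) {a : V} (ha : ∃ b, R a b) :
    ∃ b, D a b := by
  by_contra hno
  push_neg at hno
  obtain ⟨b0, hb0⟩ := ha
  set D' : V → V → Prop := fun x y => D x y ∨ (x = a ∧ y = b0) with hD'
  have hcons : Consistent D' := by
    rintro x y y' (h1 | ⟨rfl, rfl⟩) (h2 | ⟨h2a, rfl⟩)
    · exact h.2.1 _ _ _ h1 h2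
    · subst h2a; exact absurd h1 (hno y)
    · exact absurd h2 (hno y')
    · rfl
  have heq : D' = D := h.2.2 D' hcons (fun x y hxy => Or.inl hxy)
    (by rintro x y (h1 | ⟨rfl, rfl⟩); exacts [h.1 _ _ h1, hb0])
  have : D' a b0 := Or.inr ⟨rfl, rfl⟩
  rw [heq] at this
  exact hno b0 this

/-- Package a bad simple cycle into a cycle set plus successor map. -/
lemma badCycle_package {R : V → V → Prop} {n : ℕ} {S : Set V}
    (h : ∃ l, 1 ≤ l ∧ ∃ g : ZMod l → V, IsSimpleCycle R l g ∧ (∀ j, g j ∈ S) ∧ ¬ l ∣ n) :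
    ∃ (C : Set V) (nx : V → V), C.Nonempty ∧ C ⊆ S ∧ (∀ x ∈ C, R x (nx x) ∧ nx x ∈ C) ∧
      ∀ x ∈ C, nx^[n] x ≠ x := by
  classical
  obtain ⟨l, hl, g, ⟨ginj, gstep⟩, gS, hndvd⟩ := h
  haveI : NeZero l := ⟨by omega⟩
  refine ⟨Set.range g, fun x => if h : ∃ j, g j = x then g (Classical.choose h + 1) else x,
    ⟨g 0, Set.mem_range_self 0⟩, by rintro x ⟨j, rfl⟩; exact gS j, ?_, ?_⟩
  · rintro x ⟨j, rfl⟩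
    have hj : ∃ j', g j' = g j := ⟨j, rfl⟩
    have hcj : Classical.choose hj = j := ginj (Classical.choose_spec hj)
    simp only [dif_pos hj, hcj]
    exact ⟨gstep j, Set.mem_range_self _⟩
  · have hiter : ∀ (t : ℕ) (j : ZMod l),
        (fun x => if h : ∃ j, g j = x then g (Classical.choose h + 1) else x)^[t] (g j)
          = g (j + t) := by
      intro t
      induction t with
      | zero => intro j; simp
      | succ t ih =>
        intro j
        rw [Function.iterate_succ_apply', ih j]
        have hj : ∃ j', g j' = g (j + t) := ⟨j + t, rfl⟩
        have hcj : Classical.choose hj = j + t := ginj (Classical.choose_spec hj)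
        simp only [dif_pos hj, hcj]
        congr 1
        push_cast
        ring
    rintro x ⟨j, rfl⟩ hx
    rw [hiter n j] at hx
    have : j + (n : ZMod l) = j := ginj hx
    have hzero : (n : ZMod l) = 0 := by
      have := congrArg (fun z => z - j) this
      simpa [add_comm, add_sub_cancel_right] using this
    exact hndvd ((ZMod.natCast_eq_zero_iff n l).mp hzero)

def ReachN (R : V → V → Prop) : ℕ → V → V → Prop
  | 0 => fun v w => v = w
  | n+1 => fun v w => ∃ u, R v u ∧ ReachN R n u w

lemma ReachN.tail {R : V → V → Prop} :
    ∀ {n : ℕ} {v b w : V}, ReachN R n v b → R b w → ReachN R (n+1) v w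
  | 0, v, b, w, h, hb => by cases h; exact ⟨w, hb, rfl⟩
  | n+1, v, b, w, ⟨u, hu, ht⟩, hb => ⟨u, hu, ht.tail hb⟩

lemma reachN_of_reflTransGen {R : V → V → Prop} {v w : V}
    (h : Relation.ReflTransGen R v w) : ∃ n, ReachN R n v w := by
  induction h with
  | refl => exact ⟨0, rfl⟩
  | tail _ h2 ih => obtain ⟨n, hn⟩ := ih; exact ⟨n + 1, hn.tail h2⟩

end Stmt6Aux

open Stmt6Aux

theorem stmt6 {V : Type*} [Fintype V] (m : ℕ) (hm : 1 ≤ m) (k : Fin m → ℕ)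
    (hk2 : ∀ i, 2 ≤ k i) (hdvd : ∀ i j, i ≠ j → ¬ (k i ∣ k j)) (R : V → V → Prop) :
    (∀ D : V → V → Prop, Repair R D →
      ∀ i : Fin m, ∃ g : ZMod (k i) → V, IsClosedWalk D (k i) g) ↔
    (∀ i : Fin m, ∃ S : Set V, SinkSCC R S ∧ ∀ l : ℕ, 1 ≤ l → ∀ g : ZMod l → V,
      IsSimpleCycle R l g → (∀ j, g j ∈ S) → l ∣ k i) := by
  classical
  constructor
  · -- forward: every repair has all closed walks → sink SCCs with divisibility
    intro hLHS i
    by_contra hno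
    push_neg at hno
    have hbad := fun S hS => Stmt6Aux.badCycle_package (n := k i) (R := R) (S := S) (hno S hS)
    choose C nx hCne hCS hCstep hCbad using hbad
    set T : Set V := {x | ∃ h : SinkSCC R (reachSet R x), x ∈ C (reachSet R x) h} with hTdef
    have memT : ∀ (S : Set V) (hS : SinkSCC R S) (x : V), x ∈ C S hS → x ∈ T := by
      intro S hS x hx
      have e : S = reachSet R x := sinkSCC_eq_reach hS (hCS S hS hx)
      revert hS
      rw [e]
      intro hS hx
      exact ⟨hS, hx⟩
    set W : Set V := T ∪ {x | ¬ ∃ b, R x b} with hWdef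
    have exW : ∀ v : V, ∃ n, ∃ w, ReachN R n v w ∧ w ∈ W := by
      intro v
      obtain ⟨w, hvw, hterm⟩ := exists_reach_terminal R v
      rcases hterm with hdead | hsink
      · obtain ⟨n, hn⟩ := reachN_of_reflTransGen hvw
        exact ⟨n, w, hn, Or.inr hdead⟩
      · obtain ⟨x, hx⟩ := hCne _ hsink
        have hxT : x ∈ T := memT _ hsink x hx
        have hwx : Relation.ReflTransGen R w x := hCS _ hsink hx
        obtain ⟨n, hn⟩ := reachN_of_reflTransGen (hvw.trans hwx)
        exact ⟨n, x, hn, Or.inl hxT⟩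
    have hfex : ∀ v : V, ∃ u : V,
        (∀ (hS : SinkSCC R (reachSet R v)) (hv : v ∈ C (reachSet R v) hS),
          u = nx (reachSet R v) hS v) ∧
        (v ∉ T → (∃ b, R v b) → R v u ∧ Nat.find (exW u) < Nat.find (exW v)) := by
      intro v
      by_cases hvT : v ∈ T
      · obtain ⟨hS, hv⟩ := hvT
        exact ⟨nx (reachSet R v) hS v, fun hS' hv' => rfl, fun h => absurd ⟨hS, hv⟩ h⟩
      · by_cases hb : ∃ b, R v b
        · obtain ⟨w, hw, hwW⟩ := Nat.find_spec (exW v)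
          have hdpos : Nat.find (exW v) ≠ 0 := by
            intro h0
            rw [h0] at hw
            cases hw
            rcases hwW with h | h
            · exact hvT h
            · exact h hb
          obtain ⟨m', hm'⟩ := Nat.exists_eq_succ_of_ne_zero hdpos
          rw [hm'] at hw
          obtain ⟨u, hvu, hun⟩ := hw
          have hdu : Nat.find (exW u) ≤ m' := Nat.find_le ⟨w, hun, hwW⟩
          refine ⟨u, ?_, fun _ _ => ⟨hvu, by omega⟩⟩
          intro hS hv
          exact absurd (memT _ hS v hv) hvT
        · exact ⟨v, fun hS hv => absurd (memT _ hS v hv) hvT, fun _ hb' => absurd hb' hb⟩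
    choose f hf1 hf2 using hfex
    have hstep : ∀ (S : Set V) (hS : SinkSCC R S) (x : V), x ∈ C S hS →
        f x = nx S hS x ∧ f x ∈ C S hS ∧ R x (f x) := by
      intro S hS x hx
      have e : S = reachSet R x := sinkSCC_eq_reach hS (hCS S hS hx)
      revert hS
      rw [e]
      intro hS hx
      have h1 : f x = nx (reachSet R x) hS x := hf1 x hS hx
      have h2 := hCstep (reachSet R x) hS x hx
      exact ⟨h1, by rw [h1]; exact h2.2, by rw [h1]; exact h2.1⟩
    have horbit : ∀ (S : Set V) (hS : SinkSCC R S) (x : V), x ∈ C S hS →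
        ∀ t : ℕ, f^[t] x ∈ C S hS ∧ f^[t] x = (nx S hS)^[t] x := by
      intro S hS x hx t
      induction t with
      | zero => exact ⟨hx, rfl⟩
      | succ t ih =>
        obtain ⟨ih1, ih2⟩ := ih
        have hs := hstep S hS _ ih1
        rw [Function.iterate_succ_apply', Function.iterate_succ_apply']
        exact ⟨by rw [hs.1]; exact (hCstep S hS _ ih1).2, by rw [hs.1, ih2]⟩
    set D : V → V → Prop := fun a b => R a b ∧ b = f a with hDdef
    have hRf : ∀ a : V, (∃ b, R a b) → R a (f a) := by
      intro a hb
      by_cases haT : a ∈ T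
      · obtain ⟨hS, haC⟩ := haT
        exact (hstep _ hS a haC).2.2
      · exact (hf2 a haT hb).1
    have hrep : Repair R D := by
      refine ⟨fun a b h => h.1, ?_, ?_⟩
      · rintro a b b' ⟨-, rfl⟩ ⟨-, rfl⟩; rfl
      · intro D' hcons hsub hsubR
        funext a b
        apply propext
        constructor
        · intro h'
          have hRab := hsubR a b h'
          have hDfa : D a (f a) := ⟨hRf a ⟨b, hRab⟩, rfl⟩
          exact ⟨hRab, hcons a b (f a) h' (hsub _ _ hDfa)⟩
        · exact hsub a b
    obtain ⟨g, hwalk⟩ := hLHS D hrep i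
    haveI : NeZero (k i) := ⟨by have := hk2 i; omega⟩
    have hgsucc : ∀ j : ZMod (k i), g (j + 1) = f (g j) := fun j => (hwalk j).2
    have hgt : ∀ t : ℕ, g (t : ZMod (k i)) = f^[t] (g 0) := by
      intro t
      induction t with
      | zero => simp
      | succ t ih =>
        have hc : ((t + 1 : ℕ) : ZMod (k i)) = (t : ZMod (k i)) + 1 := by push_cast; ring
        rw [hc, hgsucc, ih, Function.iterate_succ_apply']
    have hper : f^[k i] (g 0) = g 0 := by
      have := hgt (k i)
      rw [ZMod.natCast_self] at this
      exact this.symm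
    have houtR : ∀ t : ℕ, ∃ b, R (f^[t] (g 0)) b := by
      intro t
      refine ⟨g ((t : ZMod (k i)) + 1), ?_⟩
      have := (hwalk (t : ZMod (k i))).1
      rwa [hgt t] at this
    by_cases hTorb : ∃ t : ℕ, f^[t] (g 0) ∈ T
    · obtain ⟨t, hS, hmem⟩ := hTorb
      have hmul : f^[k i * (t + 1)] (g 0) = g 0 := by
        rw [Function.iterate_mul]
        exact Function.iterate_fixed hper _
      have h1 : 2 * (t + 1) ≤ k i * (t + 1) := Nat.mul_le_mul_right _ (hk2 i)
      have hsum : k i * (t + 1) - t + t = k i * (t + 1) := by omega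
      have hvC : g 0 ∈ C _ hS := by
        have := (horbit _ hS _ hmem (k i * (t + 1) - t)).1
        rwa [← Function.iterate_add_apply, hsum, hmul] at this
      have hbadc := hCbad _ hS (g 0) hvC
      have := (horbit _ hS (g 0) hvC (k i)).2
      rw [hper] at this
      exact hbadc this.symm
    · push_neg at hTorb
      have hdec : ∀ t : ℕ,
          Nat.find (exW (f^[t + 1] (g 0))) < Nat.find (exW (f^[t] (g 0))) := by
        intro t
        have := (hf2 (f^[t] (g 0)) (hTorb t) (houtR t)).2
        rwa [← Function.iterate_succ_apply' f t (g 0)] at this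
      have hmono : ∀ t : ℕ,
          Nat.find (exW (f^[t] (g 0))) + t ≤ Nat.find (exW (f^[0] (g 0))) := by
        intro t
        induction t with
        | zero => omega
        | succ t ih => have := hdec t; omega
      have := hmono (Nat.find (exW (f^[0] (g 0))) + 1)
      omega
  · -- backward
    intro hRHS D hD i
    obtain ⟨S, hS, hdiv⟩ := hRHS i
    set f : V → V := fun v => if h : ∃ b, D v b then Classical.choose h else v with hfdef
    have hDf : ∀ a : V, (∃ b, D a b) → D a (f a) := by
      intro a h
      simp only [hfdef, dif_pos h]
      exact Classical.choose_spec h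
    have hfS : ∀ a ∈ S, D a (f a) ∧ f a ∈ S := by
      intro a ha
      have h1 : ∃ b, D a b := Stmt6Aux.Repair.total hD (hS.2.2.1 a ha)
      have h2 := hDf a h1
      exact ⟨h2, hS.2.2.2 a ha _ (hD.1 _ _ h2)⟩
    obtain ⟨a0, ha0⟩ := hS.1
    have horb : ∀ t : ℕ, f^[t] a0 ∈ S := by
      intro t
      induction t with
      | zero => exact ha0
      | succ t ih => rw [Function.iterate_succ_apply']; exact (hfS _ ih).2
    obtain ⟨p, q, hpq, hfe⟩ := Finite.exists_ne_map_eq_of_infinite (fun t : ℕ => f^[t] a0)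
    have hfe' : f^[p] a0 = f^[q] a0 := hfe
    have hkey : ∃ c ∈ S, ∃ r : ℕ, 0 < r ∧ f^[r] c = c := by
      rcases Nat.lt_trichotomy p q with h | h | h
      · refine ⟨f^[p] a0, horb p, q - p, by omega, ?_⟩
        rw [← Function.iterate_add_apply, Nat.sub_add_cancel h.le]
        exact hfe'.symm
      · exact absurd h hpq
      · refine ⟨f^[q] a0, horb q, p - q, by omega, ?_⟩
        rw [← Function.iterate_add_apply, Nat.sub_add_cancel h.le]
        exact hfe'
    obtain ⟨c, hcS, r, hr, hrc⟩ := hkey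
    have hper : Function.IsPeriodicPt f r c := hrc
    have hLpos : 0 < Function.minimalPeriod f c := hper.minimalPeriod_pos hr
    set L := Function.minimalPeriod f c with hLdef
    have hLper : f^[L] c = c := Function.isPeriodicPt_minimalPeriod f c
    haveI : NeZero L := ⟨by omega⟩
    have horbc : ∀ t : ℕ, f^[t] c ∈ S := by
      intro t
      induction t with
      | zero => exact hcS
      | succ t ih => rw [Function.iterate_succ_apply']; exact (hfS _ ih).2
    have hDstep : ∀ t : ℕ, D (f^[t] c) (f^[t + 1] c) := by
      intro t
      rw [Function.iterate_succ_apply']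
      exact (hfS _ (horbc t)).1
    have hinj : Function.Injective (fun j : ZMod L => f^[j.val] c) := by
      intro j j' h
      have h1 : j.val = j'.val := by
        apply Function.iterate_injOn_Iio_minimalPeriod (x := c)
          (Set.mem_Iio.mpr (ZMod.val_lt j)) (Set.mem_Iio.mpr (ZMod.val_lt j'))
        exact h
      have h2 := congrArg (Nat.cast : ℕ → ZMod L) h1
      rwa [ZMod.natCast_rightInverse j, ZMod.natCast_rightInverse j'] at h2
    have hval : ∀ j : ZMod L, (((j + 1).val : ℕ) : ZMod L) = ((j.val + 1 : ℕ) : ZMod L) := by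
      intro j
      push_cast
      rw [ZMod.natCast_rightInverse (j + 1), ZMod.natCast_rightInverse j]
    have hRstep : ∀ j : ZMod L, R (f^[j.val] c) (f^[(j + 1).val] c) := by
      intro j
      rw [iterate_congr_mod hLper (hval j)]
      exact hD.1 _ _ (hDstep j.val)
    have hLdvd : L ∣ k i :=
      hdiv L hLpos (fun j => f^[j.val] c) ⟨hinj, hRstep⟩ (fun j => horbc _)
    haveI : NeZero (k i) := ⟨by have := hk2 i; omega⟩
    have hkper : f^[k i] c = c := by
      obtain ⟨s, hs⟩ := hLdvd
      rw [hs, Function.iterate_mul]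
      exact Function.iterate_fixed hLper s
    have hval2 : ∀ j : ZMod (k i),
        (((j + 1).val : ℕ) : ZMod (k i)) = ((j.val + 1 : ℕ) : ZMod (k i)) := by
      intro j
      push_cast
      rw [ZMod.natCast_rightInverse (j + 1), ZMod.natCast_rightInverse j]
    refine ⟨fun j => f^[j.val] c, fun j => ?_⟩
    show D (f^[j.val] c) (f^[(j + 1).val] c)
    rw [iterate_congr_mod hkper (hval2 j)]
    exact hDstep j.val
end
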